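/- arXiv:1006.2814 — 2 statements merged into one kernel-verified Lean document; each statement's English description precedes it below -/
import Mathlib

section
/- Let Q′ be obtained from a polytope Q by pushing a vertex v to a new position v′ ∈ Q. Then: (1) for every facet F′ of Q′ with vertex set S′, setting S = (S′ ∖ {v′}) ∪ {v} if v′ ∈ F′ and S = S′ otherwise, there is a unique facet φ(F′) of Q with S ⊆ φ(F′); and (2) the map F′ ↦ φ(F′) sends any two adjacent facets of Q′ (facets sharing a ridge) to either the same facet of Q or to two adjacent facets of Q. -/
open scoped Pointwise

variable {V : Type*} [AddCommGroup V] [Module ℝ V]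

/-- A polytope is the convex hull of a finite set of points. -/
def IsPolytope (P : Set V) : Prop :=
  ∃ S : Set V, S.Finite ∧ P = convexHull ℝ S

/-- The dimension of a set: the dimension of its affine span. -/
noncomputable def adim (P : Set V) : ℕ :=
  Module.finrank ℝ (vectorSpan ℝ P)

/-- A face of a polytope: the set of maximizers over it of some linear functional. -/
def IsFaceOf (F P : Set V) : Prop :=
  ∃ l : V →ₗ[ℝ] ℝ, F = {x ∈ P | ∀ y ∈ P, l y ≤ l x}

/-- A vertex: a point whose singleton is a face. -/
def IsVertexOf (x : V) (P : Set V) : Prop := IsFaceOf {x} P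

/-- A facet: a face of dimension `dim P - 1`. -/
def IsFacetOf (F P : Set V) : Prop := IsFaceOf F P ∧ adim F + 1 = adim P

/-- A ridge: a face of dimension `dim P - 2`. -/
def IsRidgeOf (F P : Set V) : Prop := IsFaceOf F P ∧ adim F + 2 = adim P

def vertexSet (P : Set V) : Set V := {x | IsVertexOf x P}

/-- The graph of a polytope: vertices are its vertices, adjacency means being
the two endpoints of an edge (a one-dimensional face, i.e. the segment between
them is a face). -/
def polyGraph (P : Set V) : SimpleGraph V where
  Adj x y := x ≠ y ∧ IsVertexOf x P ∧ IsVertexOf y P ∧ IsFaceOf (segment ℝ x y) P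
  symm := by
    constructor
    rintro x y ⟨hxy, hx, hy, hseg⟩
    exact ⟨hxy.symm, hy, hx, by rwa [segment_symm]⟩
  loopless := by constructor; rintro x ⟨h, -⟩; exact h rfl

/-- Graph distance between two vertices of a polytope. -/
noncomputable def vertexDist (P : Set V) (x y : V) : ℕ := (polyGraph P).dist x y

/-- The combinatorial diameter of a polytope: the diameter of its graph. -/
noncomputable def polyDiam (P : Set V) : ℕ :=
  sSup {n | ∃ x y, IsVertexOf x P ∧ IsVertexOf y P ∧ vertexDist P x y = n}

noncomputable def numFacets (P : Set V) : ℕ := {F | IsFacetOf F P}.ncard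

noncomputable def numVertices (P : Set V) : ℕ := (vertexSet P).ncard

/-- The dual graph of a polytope: nodes are its facets, two facets adjacent iff
their intersection is a ridge. -/
def dualGraph (P : Set V) : SimpleGraph (Set V) where
  Adj F F' := F ≠ F' ∧ IsFacetOf F P ∧ IsFacetOf F' P ∧ IsRidgeOf (F ∩ F') P
  symm := by
    constructor
    rintro F F' ⟨hne, hF, hF', hr⟩
    exact ⟨hne.symm, hF', hF, by rwa [Set.inter_comm]⟩
  loopless := by constructor; rintro F ⟨h, -⟩; exact h rfl

/-- Dual distance between two facets. -/
noncomputable def dualDist (P F F' : Set V) : ℕ := (dualGraph P).dist F F'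

/-- The dual diameter of a polytope. -/
noncomputable def dualDiam (P : Set V) : ℕ :=
  sSup {n | ∃ F F', IsFacetOf F P ∧ IsFacetOf F' P ∧ dualDist P F F' = n}

/-- `Hdiam n d` : the maximum combinatorial diameter of a `d`-dimensional
polytope with `n` facets. -/
noncomputable def Hdiam (n d : ℕ) : ℕ :=
  sSup {δ | ∃ (N : ℕ) (P : Set (Fin N → ℝ)),
    IsPolytope P ∧ adim P = d ∧ numFacets P = n ∧ polyDiam P = δ}

/-- A spindle: a polytope with two distinguished vertices `u`, `v` such that
every facet contains exactly one of them. -/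
structure IsSpindle (P : Set V) (u v : V) : Prop where
  poly : IsPolytope P
  vert_u : IsVertexOf u P
  vert_v : IsVertexOf v P
  facet_cond : ∀ F, IsFacetOf F P → (u ∈ F ↔ v ∉ F)

/-- A prismatoid: a polytope with two designated parallel facets containing all
of its vertices. -/
structure IsPrismatoid (Q Qp Qm : Set V) : Prop where
  poly : IsPolytope Q
  facet_p : IsFacetOf Qp Q
  facet_m : IsFacetOf Qm Q
  parallel : ∃ (l : V →ₗ[ℝ] ℝ) (c₁ c₂ : ℝ), l ≠ 0 ∧ c₁ ≠ c₂ ∧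
    (∀ x ∈ Qp, l x = c₁) ∧ (∀ x ∈ Qm, l x = c₂)
  verts : vertexSet Q ⊆ Qp ∪ Qm

/-- A polytope is simplicial if every facet has exactly `dim P` vertices. -/
def IsSimplicial (P : Set V) : Prop :=
  ∀ F, IsFacetOf F P → (vertexSet F).ncard = adim P

/-- A polytope is simple if every vertex lies in exactly `dim P` facets. -/
def IsSimple (P : Set V) : Prop :=
  ∀ x, IsVertexOf x P → {F | IsFacetOf F P ∧ x ∈ F}.ncard = adim P

open scoped Classical

/-- `Q'` is obtained from `Q` by pushing the vertex `v` to position `v' ∈ Q`: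
the vertex set of `Q'` is `(V ∖ {v}) ∪ {v'}` and the only hyperplanes spanned
by vertices of `Q` meeting the segment `[v,v']` are those containing `v`. -/
def ObtainedByPushing {V : Type*} [AddCommGroup V] [Module ℝ V]
    (Q Q' : Set V) (v v' : V) : Prop :=
  IsPolytope Q ∧ IsVertexOf v Q ∧ v' ∈ Q ∧
  Q' = convexHull ℝ ((vertexSet Q \ {v}) ∪ {v'}) ∧
  vertexSet Q' = (vertexSet Q \ {v}) ∪ {v'} ∧
  ∀ S : Set V, S ⊆ vertexSet Q → adim S + 1 = adim Q →
    (∃ x ∈ segment ℝ v v', x ∈ affineSpan ℝ S) → v ∈ affineSpan ℝ S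

/-- Given a facet `F'` of `Q'` with vertex set `S'`, the set
`S = (S' ∖ {v'}) ∪ {v}` if `v' ∈ F'`, and `S = S'` otherwise. -/
noncomputable def pushVerts {V : Type*} [AddCommGroup V] [Module ℝ V]
    (F' : Set V) (v v' : V) : Set V :=
  if v' ∈ F' then (vertexSet F' \ {v'}) ∪ {v} else vertexSet F'

/-!
For a facet `F'` of `Q'` let `S` be its vertex set with `v'` replaced by `v`. The genericity of
the push shows that `S` spans a hyperplane `H` of the affine hull of `Q` supporting `Q`, and
`φ F' = Q ∩ H` is then the only facet of `Q` containing `S`. If `v' ∉ F'`, `H` is the hyperplane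
of `F'`: were `v` strictly beyond it, `[v, v']` would cross it, so it would contain `v`. If
`v' ∈ F'` and the other vertices of `F'` still span that hyperplane, it contains `v'`, hence `v`.
Otherwise they span a flat `L` of codimension two and `H` is the hyperplane through `L` and `v`;
a vertex strictly beyond `H` would give a hyperplane through `L`, spanned by vertices, separating
`v` from `v'`. For adjacent facets `F₁`, `F₂` of `Q'`, the facets `φ F₁` and `φ F₂` both contain
the vertices of the ridge `F₁ ∩ F₂` other than `v'` together with `v` or `v'`, and these span a
flat of codimension two.
-/

open Set

/-! ### Affine dimension -/

lemma adim_convexHull (S : Set V) : adim (convexHull ℝ S) = adim S := by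
  rw [adim, adim, ← direction_affineSpan, affineSpan_convexHull, direction_affineSpan]

lemma adim_le_of_subset_affineSpan {S T : Set V} [FiniteDimensional ℝ (vectorSpan ℝ T)]
    (h : S ⊆ affineSpan ℝ T) : adim S ≤ adim T := by
  refine Submodule.finrank_mono ?_
  simpa only [direction_affineSpan] using AffineSubspace.direction_le (affineSpan_le.2 h)

lemma adim_mono {S T : Set V} [FiniteDimensional ℝ (vectorSpan ℝ T)] (h : S ⊆ T) :
    adim S ≤ adim T :=
  adim_le_of_subset_affineSpan (h.trans (subset_affineSpan ℝ T))

lemma affineSpan_eq_of_subset_of_adim_le {S T : Set V} [FiniteDimensional ℝ (vectorSpan ℝ T)]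
    (hS : S.Nonempty) (h : S ⊆ affineSpan ℝ T) (hd : adim T ≤ adim S) :
    affineSpan ℝ S = affineSpan ℝ T := by
  have hle : affineSpan ℝ S ≤ affineSpan ℝ T := affineSpan_le.2 h
  have hdir : vectorSpan ℝ S ≤ vectorSpan ℝ T := by
    simpa only [direction_affineSpan] using AffineSubspace.direction_le hle
  refine AffineSubspace.eq_of_direction_eq_of_nonempty_of_le ?_ (hS.mono (subset_affineSpan ℝ S))
    hle
  simpa only [direction_affineSpan] using Submodule.eq_of_le_of_finrank_le hdir hd

lemma adim_insert_of_notMem_affineSpan {S : Set V} [FiniteDimensional ℝ (vectorSpan ℝ S)]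
    (hS : S.Nonempty) {p : V} (hp : p ∉ affineSpan ℝ S) : adim (insert p S) = adim S + 1 := by
  obtain ⟨s, hs⟩ := hS
  have hlt : vectorSpan ℝ S < vectorSpan ℝ (insert p S) := by
    refine lt_of_le_of_ne (vectorSpan_mono ℝ (subset_insert p S)) fun heq => hp ?_
    have hps : p -ᵥ s ∈ (affineSpan ℝ S).direction := by
      rw [direction_affineSpan, heq]
      exact vsub_mem_vectorSpan ℝ (mem_insert p S) (mem_insert_of_mem p hs)
    simpa using AffineSubspace.vadd_mem_of_mem_direction hps (subset_affineSpan ℝ S hs)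
  have := Submodule.finrank_lt_finrank_of_lt hlt
  have := finrank_vectorSpan_insert_le_set ℝ S p
  rw [adim, adim]
  omega

lemma adim_insert_le_adim_insert {S : Set V} [FiniteDimensional ℝ (vectorSpan ℝ S)] (a : V)
    {b : V} (hb : b ∉ affineSpan ℝ S) : adim (insert a S) ≤ adim (insert b S) := by
  rcases S.eq_empty_or_nonempty with rfl | hS
  · rw [adim, adim, insert_empty_eq, insert_empty_eq, vectorSpan_singleton, vectorSpan_singleton]
  rw [adim_insert_of_notMem_affineSpan hS hb]
  exact finrank_vectorSpan_insert_le_set ℝ S a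

lemma adim_add_one_le_of_notMem_affineSpan {S T : Set V} [FiniteDimensional ℝ (vectorSpan ℝ T)]
    (hST : S ⊆ T) (hS : S.Nonempty) {x : V} (hx : x ∈ T) (hxS : x ∉ affineSpan ℝ S) :
    adim S + 1 ≤ adim T := by
  have : FiniteDimensional ℝ (vectorSpan ℝ S) :=
    Submodule.finiteDimensional_of_le (vectorSpan_mono ℝ hST)
  rw [← adim_insert_of_notMem_affineSpan hS hxS]
  exact adim_mono (insert_subset hx hST)

lemma exists_subset_adim_eq_notMem_affineSpan {W : Set V} [FiniteDimensional ℝ (vectorSpan ℝ W)]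
    {a b : V} (ha : a ∈ W) (hab : a ≠ b) :
    ∀ n < adim W, ∃ S ⊆ W, a ∈ S ∧ adim S = n ∧ b ∉ affineSpan ℝ S := by
  intro n
  induction n with
  | zero =>
    refine fun _ => ⟨{a}, singleton_subset_iff.2 ha, rfl, by simp [adim], fun hb => hab ?_⟩
    exact ((AffineSubspace.mem_affineSpan_singleton ℝ V).1 hb).symm
  | succ n ih =>
    intro hn
    obtain ⟨S, hSW, haS, hSd, hbS⟩ := ih (by omega)
    have : FiniteDimensional ℝ (vectorSpan ℝ S) :=
      Submodule.finiteDimensional_of_le (vectorSpan_mono ℝ hSW)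
    have hbSd := adim_insert_of_notMem_affineSpan ⟨a, haS⟩ hbS
    obtain ⟨w, hwW, hw⟩ : ∃ w ∈ W, w ∉ affineSpan ℝ (insert b S) := by
      by_contra! hW
      have := adim_le_of_subset_affineSpan hW
      omega
    have hwS : w ∉ affineSpan ℝ S := fun hwS => hw (affineSpan_mono ℝ (subset_insert b S) hwS)
    have hwSd := adim_insert_of_notMem_affineSpan ⟨a, haS⟩ hwS
    refine ⟨insert w S, insert_subset hwW hSW, mem_insert_of_mem w haS, by omega, fun hb => hw ?_⟩
    rw [affineSpan_eq_of_subset_of_adim_le (insert_nonempty b S)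
      (insert_subset hb ((subset_insert w S).trans (subset_affineSpan ℝ _))) (by omega)]
    exact subset_affineSpan ℝ _ (mem_insert w S)

lemma apply_eq_zero_of_mem_affineSpan {S : Set V} {f : V →ᵃ[ℝ] ℝ} (hf : ∀ s ∈ S, f s = 0)
    {x : V} (hx : x ∈ affineSpan ℝ S) : f x = 0 :=
  AffineMap.eqOn_affineSpan (g := 0) hf hx

lemma mem_affineSpan_of_apply_eq_zero {S T : Set V} [FiniteDimensional ℝ (vectorSpan ℝ T)]
    (hST : S ⊆ T) (hS : S.Nonempty) (hd : adim T ≤ adim S + 1) {f : V →ᵃ[ℝ] ℝ}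
    (hf : ∀ s ∈ S, f s = 0) {x₀ : V} (hx₀ : x₀ ∈ affineSpan ℝ T) (hfx₀ : f x₀ ≠ 0) {x : V}
    (hx : x ∈ affineSpan ℝ T) (hfx : f x = 0) : x ∈ affineSpan ℝ S := by
  by_contra hxS
  have : FiniteDimensional ℝ (vectorSpan ℝ S) :=
    Submodule.finiteDimensional_of_le (vectorSpan_mono ℝ hST)
  have hspan : affineSpan ℝ (insert x S) = affineSpan ℝ T :=
    affineSpan_eq_of_subset_of_adim_le (insert_nonempty x S)
      (insert_subset hx (hST.trans (subset_affineSpan ℝ T)))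
      (by rw [adim_insert_of_notMem_affineSpan hS hxS]; exact hd)
  exact hfx₀ (apply_eq_zero_of_mem_affineSpan (forall_mem_insert.2 ⟨hfx, hf⟩) (hspan ▸ hx₀))

lemma mem_affineSpan_of_apply_eq_zero_of_apply_eq_zero {S T : Set V}
    [FiniteDimensional ℝ (vectorSpan ℝ T)] (hST : S ⊆ T) (hS : S.Nonempty) {p : V} (hpT : p ∈ T)
    (hd : adim T ≤ adim (insert p S) + 1) {f g : V →ᵃ[ℝ] ℝ} (hf : ∀ s ∈ insert p S, f s = 0)
    (hg : ∀ s ∈ S, g s = 0) (hgp : g p ≠ 0) {x₀ : V} (hx₀ : x₀ ∈ affineSpan ℝ T)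
    (hfx₀ : f x₀ ≠ 0) {x : V} (hx : x ∈ affineSpan ℝ T) (hfx : f x = 0) (hgx : g x = 0) :
    x ∈ affineSpan ℝ S := by
  have hpST : insert p S ⊆ T := insert_subset hpT hST
  have : FiniteDimensional ℝ (vectorSpan ℝ (insert p S)) :=
    Submodule.finiteDimensional_of_le (vectorSpan_mono ℝ hpST)
  exact mem_affineSpan_of_apply_eq_zero (subset_insert p S) hS
    (finrank_vectorSpan_insert_le_set ℝ S p) hg (subset_affineSpan ℝ _ (mem_insert p S)) hgp
    (mem_affineSpan_of_apply_eq_zero hpST (insert_nonempty p S) hd hf hx₀ hfx₀ hx hfx) hgx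

lemma exists_affineMap_eq_zero_of_notMem_affineSpan {S : Set V} {p : V}
    (hp : p ∉ affineSpan ℝ S) : ∃ g : V →ᵃ[ℝ] ℝ, (∀ s ∈ S, g s = 0) ∧ g p = 1 := by
  rcases S.eq_empty_or_nonempty with rfl | ⟨s₀, hs₀⟩
  · exact ⟨AffineMap.const ℝ V 1, by simp, rfl⟩
  have hps : p - s₀ ∉ vectorSpan ℝ S := fun h => hp <| by
    have := AffineSubspace.vadd_mem_of_mem_direction
      ((direction_affineSpan ℝ S).symm ▸ h) (subset_affineSpan ℝ S hs₀)
    rwa [vadd_eq_add, sub_add_cancel] at this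
  obtain ⟨k, hk0, hk1⟩ := LinearMap.exists_extend_of_notMem (0 : vectorSpan ℝ S →ₗ[ℝ] ℝ) hps 1
  refine ⟨k.toAffineMap - AffineMap.const ℝ V (k s₀), fun s hs => ?_, by simpa using hk1⟩
  simpa [sub_eq_zero] using LinearMap.congr_fun hk0 ⟨s - s₀, vsub_mem_vectorSpan ℝ hs hs₀⟩

lemma exists_mem_segment_apply_eq_zero {f : V →ᵃ[ℝ] ℝ} {a b : V} (ha : 0 ≤ f a)
    (hb : f b ≤ 0) : ∃ z ∈ segment ℝ a b, f z = 0 := by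
  have hcont : Continuous fun t : ℝ => f (AffineMap.lineMap a b t) := by
    simp_rw [AffineMap.apply_lineMap]
    exact AffineMap.lineMap_continuous
  obtain ⟨t, ht, hft⟩ :=
    intermediate_value_Icc' zero_le_one hcont.continuousOn (by simpa using And.intro hb ha)
  exact ⟨_, segment_eq_image_lineMap ℝ a b ▸ mem_image_of_mem _ ht, hft⟩

/-! ### Faces of polytopes -/

lemma IsFaceOf.subset {F P : Set V} (hF : IsFaceOf F P) : F ⊆ P := by
  obtain ⟨l, rfl⟩ := hF
  exact sep_subset _ _

lemma IsVertexOf.mem {x : V} {P : Set V} (hx : IsVertexOf x P) : x ∈ P :=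
  IsFaceOf.subset hx (mem_singleton x)

lemma vertexSet_subset (P : Set V) : vertexSet P ⊆ P := fun _ hx => IsVertexOf.mem hx

lemma isFaceOf_setOf_apply_eq_zero {P : Set V} {f : V →ᵃ[ℝ] ℝ} (hle : ∀ x ∈ P, f x ≤ 0)
    {x₀ : V} (hx₀ : x₀ ∈ P) (hfx₀ : f x₀ = 0) : IsFaceOf {x ∈ P | f x = 0} P := by
  have hlin : ∀ x y, f.linear x - f.linear y = f x - f y := fun x y => by
    rw [← map_sub, ← vsub_eq_sub, f.linearMap_vsub, vsub_eq_sub]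
  refine ⟨f.linear, Set.ext fun x => and_congr_right fun hx => ⟨fun hfx y hy => ?_, fun hmax => ?_⟩⟩
  · linarith [hlin y x, hle y hy]
  · linarith [hlin x₀ x, hmax x₀ hx₀, hle x hx]

lemma IsFaceOf.exists_affineMap {F P : Set V} (hF : IsFaceOf F P) (hne : F.Nonempty) :
    ∃ f : V →ᵃ[ℝ] ℝ, (∀ x ∈ P, f x ≤ 0) ∧ F = {x ∈ P | f x = 0} := by
  obtain ⟨l, rfl⟩ := hF
  obtain ⟨x₀, hx₀P, hx₀⟩ := hne
  refine ⟨l.toAffineMap - AffineMap.const ℝ V (l x₀), fun x hx => by simpa using hx₀ x hx, ?_⟩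
  ext x
  simp only [mem_ofPred_eq, AffineMap.coe_sub, LinearMap.coe_toAffineMap, AffineMap.coe_const,
    Pi.sub_apply, Function.const_apply, sub_eq_zero]
  exact and_congr_right fun hx =>
    ⟨fun hmax => le_antisymm (hx₀ x hx) (hmax x₀ hx₀P), fun hlx y hy => hlx ▸ hx₀ y hy⟩

lemma IsFaceOf.eq_inter_affineSpan {F P : Set V} (hF : IsFaceOf F P) (hne : F.Nonempty) :
    F = P ∩ affineSpan ℝ F := by
  obtain ⟨f, -, hF⟩ := hF.exists_affineMap hne
  refine Subset.antisymm (fun x hx => ⟨(hF.subset hx).1, subset_affineSpan ℝ F hx⟩) ?_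
  rintro x ⟨hxP, hxF⟩
  rw [hF] at hxF ⊢
  exact ⟨hxP, apply_eq_zero_of_mem_affineSpan (fun y hy => hy.2) hxF⟩

lemma IsFaceOf.inter {F₁ F₂ P : Set V} (h₁ : IsFaceOf F₁ P) (h₂ : IsFaceOf F₂ P)
    (hne : (F₁ ∩ F₂).Nonempty) : IsFaceOf (F₁ ∩ F₂) P := by
  obtain ⟨f₁, hf₁, rfl⟩ := h₁.exists_affineMap (hne.mono inter_subset_left)
  obtain ⟨f₂, hf₂, rfl⟩ := h₂.exists_affineMap (hne.mono inter_subset_right)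
  have hsum : {x ∈ P | f₁ x = 0} ∩ {x ∈ P | f₂ x = 0} = {x ∈ P | (f₁ + f₂) x = 0} := by
    ext x
    simp only [mem_inter_iff, mem_ofPred_eq, AffineMap.coe_add, Pi.add_apply]
    exact ⟨fun h => ⟨h.1.1, by rw [h.1.2, h.2.2, add_zero]⟩, fun ⟨hx, h⟩ =>
      ⟨⟨hx, by linarith [hf₁ x hx, hf₂ x hx]⟩, ⟨hx, by linarith [hf₁ x hx, hf₂ x hx]⟩⟩⟩
  obtain ⟨x₀, hx₀⟩ := hne
  rw [hsum] at hx₀ ⊢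
  exact isFaceOf_setOf_apply_eq_zero (fun x hx => add_nonpos (hf₁ x hx) (hf₂ x hx)) hx₀.1 hx₀.2

lemma IsFaceOf.mono {A F P : Set V} (hA : IsFaceOf A P) (hne : A.Nonempty) (hAF : A ⊆ F)
    (hFP : F ⊆ P) : IsFaceOf A F := by
  obtain ⟨f, hf, rfl⟩ := hA.exists_affineMap hne
  obtain ⟨x₀, hx₀P, hfx₀⟩ := hne
  have hA : {x ∈ P | f x = 0} = {x ∈ F | f x = 0} :=
    Subset.antisymm (fun x hx => ⟨hAF hx, hx.2⟩) (fun x hx => ⟨hFP hx.1, hx.2⟩)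
  rw [hA]
  exact isFaceOf_setOf_apply_eq_zero (fun x hx => hf x (hFP hx)) (hAF ⟨hx₀P, hfx₀⟩) hfx₀

lemma convexHull_setOf_apply_eq_zero {S : Set V} {f : V →ᵃ[ℝ] ℝ} (hf : ∀ s ∈ S, f s ≤ 0) :
    {x ∈ convexHull ℝ S | f x = 0} = convexHull ℝ {s ∈ S | f s = 0} := by
  refine Subset.antisymm ?_ fun x hx => ⟨convexHull_mono (sep_subset _ _) hx,
    apply_eq_zero_of_mem_affineSpan (fun s hs => hs.2) (convexHull_subset_affineSpan _ hx)⟩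
  rintro x ⟨hx, hfx⟩
  obtain ⟨ι, t, w, z, hw₀, hw₁, hz, rfl⟩ := (convexHull_eq S).subset hx
  have hsum : ∑ i ∈ t, w i * f (z i) = 0 := by
    rw [← hfx, ← affineCombination_eq_centerMass hw₁, Finset.map_affineCombination _ _ _ hw₁,
      Finset.affineCombination_eq_linear_combination _ _ _ hw₁]
    simp [smul_eq_mul]
  have hzero := (Finset.sum_eq_zero_iff_of_nonpos fun i hi =>
    mul_nonpos_of_nonneg_of_nonpos (hw₀ i hi) (hf _ (hz i hi))).1 hsum
  rw [← Finset.centerMass_filter_ne_zero]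
  refine Finset.centerMass_mem_convexHull _ (fun i hi => hw₀ i (Finset.mem_filter.1 hi).1)
    (by rw [Finset.sum_filter_ne_zero, hw₁]; exact one_pos) fun i hi => ?_
  obtain ⟨hi, hwi⟩ := Finset.mem_filter.1 hi
  exact ⟨hz i hi, (mul_eq_zero.1 (hzero i hi)).resolve_left hwi⟩

/-- `V` carries no topology: the point and the hull live in a finite-dimensional subspace, which
is identified with `Fin n → ℝ` to separate them there. -/
lemma exists_linearMap_lt_of_notMem_convexHull {R : Set V} (hR : R.Finite) {x : V}
    (hx : x ∉ convexHull ℝ R) : ∃ l : V →ₗ[ℝ] ℝ, ∀ y ∈ convexHull ℝ R, l y < l x := by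
  set M := Submodule.span ℝ (insert x R)
  have : FiniteDimensional ℝ M := FiniteDimensional.span_of_finite ℝ (hR.insert x)
  obtain ⟨π, hπ⟩ := LinearMap.exists_extend (Module.finBasis ℝ M).equivFun.toLinearMap
  have hRM : convexHull ℝ R ⊆ M :=
    convexHull_min ((subset_insert x R).trans Submodule.subset_span) M.convex
  have hπx : π x ∉ convexHull ℝ (π '' R) := by
    rw [← LinearMap.image_convexHull]
    rintro ⟨y, hy, hyx⟩
    have hxM : x ∈ M := Submodule.subset_span (mem_insert x R)
    have hπy := LinearMap.congr_fun hπ ⟨y, hRM hy⟩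
    have hπx := LinearMap.congr_fun hπ ⟨x, hxM⟩
    simp only [LinearMap.coe_comp, Function.comp_apply, Submodule.subtype_apply] at hπy hπx
    have : (⟨y, hRM hy⟩ : M) = ⟨x, hxM⟩ :=
      (Module.finBasis ℝ M).equivFun.injective (hπy.symm.trans (hyx.trans hπx))
    obtain rfl : y = x := congrArg Subtype.val this
    exact hx hy
  obtain ⟨f, u, hfu, hux⟩ := geometric_hahn_banach_closed_point (convex_convexHull ℝ _)
    ((hR.image π).isClosed_convexHull (𝕜 := ℝ)) hπx
  refine ⟨f.toLinearMap ∘ₗ π, fun y hy => (hfu _ ?_).trans hux⟩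
  rw [← LinearMap.image_convexHull]
  exact mem_image_of_mem π hy

lemma isVertexOf_convexHull_of_notMem_convexHull_sdiff {S : Set V} (hS : S.Finite) {s : V}
    (hs : s ∈ S) (hns : s ∉ convexHull ℝ (S \ {s})) : IsVertexOf s (convexHull ℝ S) := by
  obtain ⟨l, hl⟩ := exists_linearMap_lt_of_notMem_convexHull (hS.sdiff (t := {s})) hns
  set f := l.toAffineMap - AffineMap.const ℝ V (l s)
  have hf : ∀ t, f t = l t - l s := fun t => rfl
  have hlt : ∀ t ∈ S, t ≠ s → f t < 0 := fun t ht hts => by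
    rw [hf, sub_neg]
    exact hl t (subset_convexHull ℝ _ ⟨ht, hts⟩)
  have hfs : f s = 0 := by rw [hf, sub_self]
  have hfS : ∀ t ∈ S, f t ≤ 0 := fun t ht =>
    (eq_or_ne t s).elim (fun hts => hts ▸ hfs.le) fun hts => (hlt t ht hts).le
  have hzero : {t ∈ S | f t = 0} = {s} :=
    Subset.antisymm (fun t ⟨ht, hft⟩ => by_contra fun hts => (hlt t ht hts).ne hft)
      (singleton_subset_iff.2 ⟨hs, hfs⟩)
  have hface := convexHull_setOf_apply_eq_zero hfS
  rw [hzero, convexHull_singleton] at hface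
  rw [IsVertexOf, ← hface]
  exact isFaceOf_setOf_apply_eq_zero (fun x hx => convexHull_min hfS
    ((convex_Iic 0).affine_preimage f) hx) (subset_convexHull ℝ S hs) hfs

lemma vertexSet_convexHull_subset (S : Set V) : vertexSet (convexHull ℝ S) ⊆ S := by
  intro x hx
  obtain ⟨f, hf, hfx⟩ := IsFaceOf.exists_affineMap hx (singleton_nonempty x)
  rw [convexHull_setOf_apply_eq_zero fun s hs => hf s (subset_convexHull ℝ S hs)] at hfx
  obtain ⟨s, hs⟩ := convexHull_nonempty_iff.1 (hfx ▸ singleton_nonempty x)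
  exact eq_of_mem_singleton (hfx ▸ subset_convexHull ℝ _ hs) ▸ hs.1

/-- Minkowski's theorem for polytopes: a minimal generating set consists of vertices. -/
lemma IsPolytope.convexHull_vertexSet {P : Set V} (hP : IsPolytope P) :
    convexHull ℝ (vertexSet P) = P := by
  obtain ⟨S, hS, rfl⟩ := hP
  obtain ⟨S₀, ⟨hS₀S, hS₀⟩, hmin⟩ :=
    (hS.finite_subsets.subset fun _ h => h.1 :
      {S₀ | S₀ ⊆ S ∧ convexHull ℝ S₀ = convexHull ℝ S}.Finite).exists_minimal
      ⟨S, subset_rfl, rfl⟩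
  have hvert : S₀ ⊆ vertexSet (convexHull ℝ S) := by
    intro s hs
    rw [← hS₀]
    refine isVertexOf_convexHull_of_notMem_convexHull_sdiff (hS.subset hS₀S) hs fun hmem => ?_
    have hsub : S₀ ⊆ convexHull ℝ (S₀ \ {s}) := fun t ht =>
      (eq_or_ne t s).elim (fun hts => hts ▸ hmem) fun hts => subset_convexHull ℝ _ ⟨ht, hts⟩
    have hspan : convexHull ℝ (S₀ \ {s}) = convexHull ℝ S :=
      hS₀ ▸ (convexHull_mono sdiff_subset).antisymm (convexHull_min hsub (convex_convexHull ℝ _))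
    exact (hmin ⟨sdiff_subset.trans hS₀S, hspan⟩ sdiff_subset hs).2 rfl
  exact (convexHull_mono (vertexSet_convexHull_subset S)).antisymm
    (hS₀.symm.subset.trans (convexHull_mono hvert))

lemma IsPolytope.finite_vertexSet {P : Set V} (hP : IsPolytope P) : (vertexSet P).Finite := by
  obtain ⟨S, hS, rfl⟩ := hP
  exact hS.subset (vertexSet_convexHull_subset S)

lemma IsPolytope.adim_vertexSet {P : Set V} (hP : IsPolytope P) : adim (vertexSet P) = adim P := by
  rw [← adim_convexHull, hP.convexHull_vertexSet]

lemma IsPolytope.convex {P : Set V} (hP : IsPolytope P) : Convex ℝ P := by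
  obtain ⟨S, -, rfl⟩ := hP
  exact convex_convexHull ℝ S

lemma IsPolytope.finiteDimensional_vectorSpan {P : Set V} (hP : IsPolytope P) {S : Set V}
    (hS : S ⊆ P) : FiniteDimensional ℝ (vectorSpan ℝ S) := by
  obtain ⟨T, hT, rfl⟩ := hP
  have : FiniteDimensional ℝ (vectorSpan ℝ T) := finiteDimensional_vectorSpan_of_finite ℝ hT
  refine Submodule.finiteDimensional_of_le (S₂ := vectorSpan ℝ T) ((vectorSpan_mono ℝ hS).trans ?_)
  rw [← direction_affineSpan, affineSpan_convexHull, direction_affineSpan]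

lemma IsFaceOf.nonempty {F P : Set V} (hP : IsPolytope P) (hPne : P.Nonempty)
    (hF : IsFaceOf F P) : F.Nonempty := by
  obtain ⟨S, hS, rfl⟩ := hP
  obtain ⟨l, rfl⟩ := hF
  obtain ⟨s, hs, hmax⟩ := exists_max_image S l hS (convexHull_nonempty_iff.1 hPne)
  exact ⟨s, subset_convexHull ℝ S hs, fun y hy =>
    convexHull_min hmax (convex_halfSpace_le l.isLinear (l s)) hy⟩

lemma IsFaceOf.eq_convexHull_inter {F P : Set V} (hP : IsPolytope P) (hF : IsFaceOf F P) :
    F = convexHull ℝ (vertexSet P ∩ F) := by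
  rcases F.eq_empty_or_nonempty with rfl | hne
  · rw [inter_empty, convexHull_empty]
  obtain ⟨f, hf, rfl⟩ := hF.exists_affineMap hne
  have hWP := subset_convexHull ℝ (vertexSet P)
  rw [hP.convexHull_vertexSet] at hWP
  conv_lhs => rw [← hP.convexHull_vertexSet]
  rw [convexHull_setOf_apply_eq_zero fun w hw => hf w (hWP hw)]
  congr 1
  exact Subset.antisymm (fun w hw => ⟨hw.1, hWP hw.1, hw.2⟩) fun w hw => ⟨hw.1, hw.2.2⟩

lemma IsFaceOf.vertexSet_eq {F P : Set V} (hP : IsPolytope P) (hF : IsFaceOf F P) :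
    vertexSet F = vertexSet P ∩ F := by
  refine Subset.antisymm (fun x hx => ?_) fun x ⟨hx, hxF⟩ =>
    IsFaceOf.mono hx (singleton_nonempty x) (singleton_subset_iff.2 hxF) hF.subset
  rw [hF.eq_convexHull_inter hP] at hx
  exact vertexSet_convexHull_subset _ hx

lemma IsFaceOf.vertexSet_mono {F G P : Set V} (hP : IsPolytope P) (hF : IsFaceOf F P)
    (hG : IsFaceOf G P) (hFG : F ⊆ G) : vertexSet F ⊆ vertexSet G := by
  rw [hF.vertexSet_eq hP, hG.vertexSet_eq hP]
  exact inter_subset_inter_right _ hFG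

lemma IsFaceOf.convexHull_vertexSet {F P : Set V} (hP : IsPolytope P) (hF : IsFaceOf F P) :
    convexHull ℝ (vertexSet F) = F := by
  rw [hF.vertexSet_eq hP, ← hF.eq_convexHull_inter hP]

lemma IsFaceOf.adim_vertexSet {F P : Set V} (hP : IsPolytope P) (hF : IsFaceOf F P) :
    adim (vertexSet F) = adim F := by
  rw [← adim_convexHull, hF.convexHull_vertexSet hP]

lemma IsFaceOf.vertexSet_nonempty {F P : Set V} (hP : IsPolytope P) (hPne : P.Nonempty)
    (hF : IsFaceOf F P) : (vertexSet F).Nonempty :=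
  convexHull_nonempty_iff.1 ((hF.convexHull_vertexSet hP).symm ▸ hF.nonempty hP hPne)

lemma IsPolytope.isFacetOf_setOf_apply_eq_zero {P : Set V} (hP : IsPolytope P)
    {f : V →ᵃ[ℝ] ℝ} (hle : ∀ x ∈ P, f x ≤ 0) {S : Set V} (hSP : S ⊆ P) (hS : S.Nonempty)
    (hS0 : ∀ s ∈ S, f s = 0) (hd : adim P ≤ adim S + 1) {x : V} (hx : x ∈ P) (hfx : f x ≠ 0) :
    IsFacetOf {x ∈ P | f x = 0} P := by
  have := hP.finiteDimensional_vectorSpan subset_rfl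
  have := hP.finiteDimensional_vectorSpan (sep_subset P fun x => f x = 0)
  have hSG : S ⊆ {x ∈ P | f x = 0} := fun s hs => ⟨hSP hs, hS0 s hs⟩
  obtain ⟨s, hs⟩ := hS
  have hG := isFaceOf_setOf_apply_eq_zero hle (hSP hs) (hS0 s hs)
  have hxG : x ∉ affineSpan ℝ {x ∈ P | f x = 0} := fun hxG =>
    hfx ((hG.eq_inter_affineSpan ⟨s, hSG hs⟩).symm ▸ ⟨hx, hxG⟩ : x ∈ {x ∈ P | f x = 0}).2
  have := adim_add_one_le_of_notMem_affineSpan (sep_subset _ _) ⟨s, hSG hs⟩ hx hxG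
  have := adim_mono hSG
  exact ⟨hG, by omega⟩

lemma IsFacetOf.eq_inter_affineSpan_of_subset {G P : Set V} (hP : IsPolytope P)
    (hG : IsFacetOf G P) {S : Set V} (hSG : S ⊆ G) (hS : S.Nonempty) (hd : adim P ≤ adim S + 1) :
    G = P ∩ affineSpan ℝ S := by
  have := hP.finiteDimensional_vectorSpan hG.1.subset
  rw [affineSpan_eq_of_subset_of_adim_le hS (hSG.trans (subset_affineSpan ℝ G))
    (by have := hG.2; omega)]
  exact hG.1.eq_inter_affineSpan (hS.mono hSG)

lemma IsPolytope.isRidgeOf_inter {G₁ G₂ P : Set V} (hP : IsPolytope P) (hG₁ : IsFacetOf G₁ P)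
    (hG₂ : IsFacetOf G₂ P) (hne : G₁ ≠ G₂) {D : Set V} (hD : D ⊆ G₁ ∩ G₂) (hDne : D.Nonempty)
    (hd : adim P ≤ adim D + 2) : IsRidgeOf (G₁ ∩ G₂) P := by
  have hGne : (G₁ ∩ G₂).Nonempty := hDne.mono hD
  have := hP.finiteDimensional_vectorSpan hG₁.1.subset
  have : FiniteDimensional ℝ (vectorSpan ℝ (G₁ ∩ G₂)) :=
    hP.finiteDimensional_vectorSpan (inter_subset_left.trans hG₁.1.subset)
  obtain ⟨x, hx₁, hx₂⟩ : ∃ x ∈ G₁, x ∉ G₂ := by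
    by_contra! h
    refine hne ((hG₁.1.eq_inter_affineSpan (hGne.mono inter_subset_left)).trans ?_)
    exact (hG₂.eq_inter_affineSpan_of_subset hP h (hGne.mono inter_subset_left)
      (by have := hG₁.2; omega)).symm
  have hxA : x ∉ affineSpan ℝ (G₁ ∩ G₂) := fun hxA =>
    hx₂ ((hG₂.1.eq_inter_affineSpan (hGne.mono inter_subset_right)).symm ▸
      ⟨hG₁.1.subset hx₁, affineSpan_mono ℝ inter_subset_right hxA⟩)
  have := adim_add_one_le_of_notMem_affineSpan inter_subset_left hGne hx₁ hxA
  have := adim_mono hD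
  exact ⟨hG₁.1.inter hG₂.1 hGne, by have := hG₁.2; omega⟩

/-! ### Pushing a vertex -/

lemma sdiff_subset_pushVerts (F' : Set V) (v v' : V) :
    vertexSet F' \ {v'} ⊆ pushVerts F' v v' := by
  unfold pushVerts
  split_ifs
  · exact subset_union_left
  · exact sdiff_subset

lemma mem_pushVerts {F' : Set V} {v v' : V} (hv' : v' ∈ F') : v ∈ pushVerts F' v v' := by
  rw [pushVerts, if_pos hv']
  exact mem_union_right _ rfl

/-- The map `φ` of the statement. -/
def pushFacet (Q F' : Set V) (v v' : V) : Set V := Q ∩ affineSpan ℝ (pushVerts F' v v')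

namespace ObtainedByPushing

variable {Q Q' : Set V} {v v' : V}

lemma isPolytope (h : ObtainedByPushing Q Q' v v') : IsPolytope Q := h.1

lemma mem_vertexSet (h : ObtainedByPushing Q Q' v v') : v ∈ vertexSet Q := h.2.1

lemma pushed_mem (h : ObtainedByPushing Q Q' v v') : v' ∈ Q := h.2.2.1

lemma eq_convexHull (h : ObtainedByPushing Q Q' v v') :
    Q' = convexHull ℝ ((vertexSet Q \ {v}) ∪ {v'}) := h.2.2.2.1

lemma vertexSet_eq (h : ObtainedByPushing Q Q' v v') :
    vertexSet Q' = (vertexSet Q \ {v}) ∪ {v'} := h.2.2.2.2.1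

lemma mem_affineSpan_of_mem_segment (h : ObtainedByPushing Q Q' v v') {S : Set V}
    (hS : S ⊆ vertexSet Q) (hd : adim S + 1 = adim Q) {x : V} (hx : x ∈ segment ℝ v v')
    (hxS : x ∈ affineSpan ℝ S) : v ∈ affineSpan ℝ S :=
  h.2.2.2.2.2 S hS hd ⟨x, hx, hxS⟩

lemma finiteDimensional_vectorSpan (h : ObtainedByPushing Q Q' v v') {S : Set V} (hS : S ⊆ Q) :
    FiniteDimensional ℝ (vectorSpan ℝ S) :=
  h.isPolytope.finiteDimensional_vectorSpan hS

lemma mem_vertexSet' (h : ObtainedByPushing Q Q' v v') : v' ∈ vertexSet Q' := by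
  rw [h.vertexSet_eq]
  exact mem_union_right _ rfl

lemma mem_vertexSet_of_ne (h : ObtainedByPushing Q Q' v v') {t : V} (ht : t ∈ vertexSet Q')
    (htv' : t ≠ v') : t ∈ vertexSet Q ∧ t ≠ v := by
  rw [h.vertexSet_eq] at ht
  exact ht.resolve_right htv'

lemma mem_vertexSet'_of_ne (h : ObtainedByPushing Q Q' v v') {w : V} (hw : w ∈ vertexSet Q)
    (hwv : w ≠ v) : w ∈ vertexSet Q' := by
  rw [h.vertexSet_eq]
  exact Or.inl ⟨hw, hwv⟩

lemma isPolytope' (h : ObtainedByPushing Q Q' v v') : IsPolytope Q' :=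
  ⟨_, h.isPolytope.finite_vertexSet.sdiff.union (finite_singleton v'), h.eq_convexHull⟩

lemma nonempty' (h : ObtainedByPushing Q Q' v v') : Q'.Nonempty :=
  ⟨v', vertexSet_subset Q' h.mem_vertexSet'⟩

lemma segment_subset (h : ObtainedByPushing Q Q' v v') : segment ℝ v v' ⊆ Q :=
  h.isPolytope.convex.segment_subset h.mem_vertexSet.mem h.pushed_mem

lemma subset (h : ObtainedByPushing Q Q' v v') : Q' ⊆ Q := by
  rw [h.eq_convexHull]
  exact convexHull_min (union_subset (sdiff_subset.trans (vertexSet_subset Q))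
    (singleton_subset_iff.2 h.pushed_mem)) h.isPolytope.convex

/-- A vertex `v' ≠ v` of `Q` would lie on a hyperplane spanned by vertices of `Q` avoiding `v`. -/
lemma eq_of_mem_vertexSet (h : ObtainedByPushing Q Q' v v') (hv' : v' ∈ vertexSet Q) :
    v' = v := by
  by_contra hne
  have : FiniteDimensional ℝ (vectorSpan ℝ (vertexSet Q)) :=
    h.finiteDimensional_vectorSpan (vertexSet_subset Q)
  have hd : 0 < adim (vertexSet Q) := Nat.pos_of_ne_zero fun h0 => hne <| by
    have hmem := vsub_mem_vectorSpan ℝ hv' h.mem_vertexSet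
    rwa [Submodule.finrank_eq_zero.1 h0, Submodule.mem_bot, vsub_eq_sub, sub_eq_zero] at hmem
  obtain ⟨S, hSW, hv'S, hSd, hvS⟩ :=
    exists_subset_adim_eq_notMem_affineSpan hv' hne (adim (vertexSet Q) - 1) (by omega)
  rw [h.isPolytope.adim_vertexSet] at hSd hd
  exact hvS (h.mem_affineSpan_of_mem_segment hSW (by omega) (right_mem_segment ℝ v v')
    (subset_affineSpan ℝ S hv'S))

lemma vertexSet_sdiff_eq (h : ObtainedByPushing Q Q' v v') :
    vertexSet Q' \ {v'} = vertexSet Q \ {v} := by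
  rw [h.vertexSet_eq, union_sdiff_right, sdiff_singleton_eq_self]
  exact fun hv' => hv'.2 (h.eq_of_mem_vertexSet hv'.1)

lemma adim_eq (h : ObtainedByPushing Q Q' v v') : adim Q' = adim Q := by
  set X := vertexSet Q \ {v}
  have : FiniteDimensional ℝ (vectorSpan ℝ Q) := h.finiteDimensional_vectorSpan subset_rfl
  have : FiniteDimensional ℝ (vectorSpan ℝ X) :=
    h.finiteDimensional_vectorSpan (sdiff_subset.trans (vertexSet_subset Q))
  have hQ' : adim Q' = adim (insert v' X) := by
    rw [h.eq_convexHull, adim_convexHull, union_singleton]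
  have hQ : adim Q = adim (insert v X) := by
    rw [← h.isPolytope.adim_vertexSet, insert_sdiff_singleton, insert_eq_of_mem h.mem_vertexSet]
  refine le_antisymm (adim_mono h.subset) ?_
  rw [hQ', hQ]
  by_cases hX : adim X + 1 = adim Q
  · refine adim_insert_le_adim_insert v fun hv'X => ?_
    have hvX :=
      h.mem_affineSpan_of_mem_segment (S := X) sdiff_subset hX (right_mem_segment ℝ v v') hv'X
    have := adim_le_of_subset_affineSpan (insert_subset hvX (subset_affineSpan ℝ X))
    omega
  · have : adim (insert v X) ≤ adim X + 1 := finrank_vectorSpan_insert_le_set ℝ X v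
    have := adim_mono (subset_insert v X)
    have := adim_mono (subset_insert v' X)
    omega

lemma apply_nonpos (h : ObtainedByPushing Q Q' v v') {f : V →ᵃ[ℝ] ℝ} (hf : ∀ x ∈ Q', f x ≤ 0)
    (hfv : f v ≤ 0) : ∀ x ∈ Q, f x ≤ 0 := by
  rw [← h.isPolytope.convexHull_vertexSet]
  refine fun x hx => convexHull_min (fun w hw => ?_) ((convex_Iic 0).affine_preimage f) hx
  rcases eq_or_ne w v with rfl | hwv
  · exact hfv
  · exact hf w (vertexSet_subset Q' (h.mem_vertexSet'_of_ne hw hwv))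

/-- If `f v > 0`, the segment `[v, v']` crosses the hyperplane `{f = 0}` spanned by `U`, which
then has to contain `v`. -/
lemma apply_nonpos_of_apply_nonpos (h : ObtainedByPushing Q Q' v v') {f : V →ᵃ[ℝ] ℝ}
    {U : Set V} (hUW : U ⊆ vertexSet Q) (hU : U.Nonempty) (hUd : adim U + 1 = adim Q)
    (hf0 : ∀ u ∈ U, f u = 0) (hfv' : f v' ≤ 0) : f v ≤ 0 := by
  by_contra! hfv
  have : FiniteDimensional ℝ (vectorSpan ℝ Q) := h.finiteDimensional_vectorSpan subset_rfl
  obtain ⟨z, hz, hfz⟩ := exists_mem_segment_apply_eq_zero hfv.le hfv'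
  have hzU : z ∈ affineSpan ℝ U :=
    mem_affineSpan_of_apply_eq_zero (hUW.trans (vertexSet_subset Q)) hU hUd.ge hf0
      (subset_affineSpan ℝ Q h.mem_vertexSet.mem) hfv.ne'
      (subset_affineSpan ℝ Q (h.segment_subset hz)) hfz
  exact hfv.ne' (apply_eq_zero_of_mem_affineSpan hf0
    (h.mem_affineSpan_of_mem_segment hUW hUd hz hzU))

lemma apply_eq_zero_of_apply_eq_zero (h : ObtainedByPushing Q Q' v v') {f : V →ᵃ[ℝ] ℝ}
    {U : Set V} (hUW : U ⊆ vertexSet Q) (hU : U.Nonempty) (hUd : adim U + 1 = adim Q)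
    (hf0 : ∀ u ∈ U, f u = 0) (hfv' : f v' = 0) : f v = 0 := by
  refine le_antisymm (h.apply_nonpos_of_apply_nonpos hUW hU hUd hf0 hfv'.le) (neg_nonpos.1 ?_)
  refine h.apply_nonpos_of_apply_nonpos (f := -f) hUW hU hUd (fun u hu => ?_) ?_
  · rw [AffineMap.coe_neg, Pi.neg_apply, hf0 u hu, neg_zero]
  · rw [AffineMap.coe_neg, Pi.neg_apply, hfv', neg_zero]

/-- If `v ∈ affineSpan ℝ U₀`, the face `{f = 0}` of `Q` is the convex hull of vertices lying in
`affineSpan ℝ U₀`, so it cannot contain `v'`. -/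
lemma notMem_affineSpan_of_pushed_notMem (h : ObtainedByPushing Q Q' v v') {f : V →ᵃ[ℝ] ℝ}
    (hf : ∀ x ∈ Q', f x ≤ 0) (hfv' : f v' = 0) {U₀ : Set V} (hf0 : ∀ u ∈ U₀, f u = 0)
    (hzero : ∀ w ∈ vertexSet Q, w ≠ v → f w = 0 → w ∈ U₀) (hv'U₀ : v' ∉ affineSpan ℝ U₀) :
    v ∉ affineSpan ℝ U₀ := by
  intro hvU₀
  have hfQ := h.apply_nonpos hf (apply_eq_zero_of_mem_affineSpan hf0 hvU₀).le
  have hv' : v' ∈ {x ∈ convexHull ℝ (vertexSet Q) | f x = 0} :=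
    ⟨h.isPolytope.convexHull_vertexSet.symm ▸ h.pushed_mem, hfv'⟩
  rw [convexHull_setOf_apply_eq_zero fun w hw => hfQ w hw.mem] at hv'
  refine hv'U₀ (affineSpan_le.2 (fun w hw => ?_) (convexHull_subset_affineSpan _ hv'))
  obtain ⟨hw, hfw⟩ : w ∈ vertexSet Q ∧ f w = 0 := hw
  rcases eq_or_ne w v with rfl | hwv
  · exact hvU₀
  · exact subset_affineSpan ℝ U₀ (hzero w hw hwv hfw)

/-- The rotation argument. The affine maps vanishing on `U₀` form a pencil of hyperplanes through
the codimension-two flat `affineSpan ℝ U₀`, and `g v • f - f v • g` is its member through `v`. A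
vertex `w` strictly above it and strictly below `{f = 0}` would make the member
`g w • f - f w • g` through `w`, spanned by vertices, separate `v` from `v'`. -/
lemma pencil_apply_nonpos (h : ObtainedByPushing Q Q' v v') {f g : V →ᵃ[ℝ] ℝ} {U₀ : Set V}
    (hU₀W : U₀ ⊆ vertexSet Q) (hU₀ : U₀.Nonempty) (hU₀d : adim U₀ + 2 = adim Q)
    (hf0 : ∀ u ∈ U₀, f u = 0) (hg0 : ∀ u ∈ U₀, g u = 0) (hfv' : f v' = 0) (hgv' : g v' = 1)
    {w : V} (hw : w ∈ vertexSet Q) (hfw : f w < 0) : (g v • f - f v • g) w ≤ 0 := by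
  by_contra! hpos
  have : FiniteDimensional ℝ (vectorSpan ℝ Q) := h.finiteDimensional_vectorSpan subset_rfl
  have : FiniteDimensional ℝ (vectorSpan ℝ U₀) :=
    h.finiteDimensional_vectorSpan (hU₀W.trans (vertexSet_subset Q))
  set K := g w • f - f w • g
  have hK : ∀ x, K x = g w * f x - f w * g x := fun x => rfl
  simp only [AffineMap.coe_sub, AffineMap.coe_smul, Pi.sub_apply, Pi.smul_apply,
    smul_eq_mul] at hpos
  have hKv : K v < 0 := by rw [hK]; linarith
  have hKv' : 0 < K v' := by rw [hK, hfv', hgv']; linarith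
  have hwU₀ : w ∉ affineSpan ℝ U₀ := fun hwU₀ =>
    hfw.ne (apply_eq_zero_of_mem_affineSpan hf0 hwU₀)
  have hSW : insert w U₀ ⊆ vertexSet Q := insert_subset hw hU₀W
  have hSd : adim (insert w U₀) + 1 = adim Q := by
    rw [adim_insert_of_notMem_affineSpan hU₀ hwU₀]
    omega
  have hK0 : ∀ s ∈ insert w U₀, K s = 0 := forall_mem_insert.2
    ⟨by rw [hK]; ring, fun u hu => by rw [hK, hf0 u hu, hg0 u hu]; ring⟩
  obtain ⟨z, hz, hKz⟩ := exists_mem_segment_apply_eq_zero (f := -K) (a := v) (b := v')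
    (by rw [AffineMap.coe_neg, Pi.neg_apply]; linarith)
    (by rw [AffineMap.coe_neg, Pi.neg_apply]; linarith)
  have hzS : z ∈ affineSpan ℝ (insert w U₀) :=
    mem_affineSpan_of_apply_eq_zero (hSW.trans (vertexSet_subset Q)) (insert_nonempty w U₀)
      hSd.ge hK0 (subset_affineSpan ℝ Q h.pushed_mem) hKv'.ne'
      (subset_affineSpan ℝ Q (h.segment_subset hz)) (neg_eq_zero.1 hKz)
  exact hKv.ne (apply_eq_zero_of_mem_affineSpan hK0
    (h.mem_affineSpan_of_mem_segment hSW hSd hz hzS))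

lemma exists_isFacetOf_insert_of_adim_add_two (h : ObtainedByPushing Q Q' v v')
    {f : V →ᵃ[ℝ] ℝ} (hf : ∀ x ∈ Q', f x ≤ 0) {x₀ : V} (hx₀ : x₀ ∈ Q') (hfx₀ : f x₀ ≠ 0)
    (hfv' : f v' = 0) {U₀ : Set V} (hU₀ : U₀ = {w ∈ vertexSet Q \ {v} | f w = 0})
    (hU₀ne : U₀.Nonempty) (hU₀d : adim U₀ + 2 = adim Q) (hv'U₀ : v' ∉ affineSpan ℝ U₀) :
    ∃ G, IsFacetOf G Q ∧ insert v U₀ ⊆ G ∧ adim Q ≤ adim (insert v U₀) + 1 := by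
  have hU₀W : U₀ ⊆ vertexSet Q := by rw [hU₀]; exact fun w hw => hw.1.1
  have hf0 : ∀ u ∈ U₀, f u = 0 := by rw [hU₀]; exact fun u hu => hu.2
  have hzero : ∀ w ∈ vertexSet Q, w ≠ v → f w = 0 → w ∈ U₀ := by
    rw [hU₀]
    exact fun w hw hwv hfw => ⟨⟨hw, hwv⟩, hfw⟩
  have hU₀Q := hU₀W.trans (vertexSet_subset Q)
  have : FiniteDimensional ℝ (vectorSpan ℝ Q) := h.finiteDimensional_vectorSpan subset_rfl
  have : FiniteDimensional ℝ (vectorSpan ℝ U₀) := h.finiteDimensional_vectorSpan hU₀Q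
  have hvU₀ := h.notMem_affineSpan_of_pushed_notMem hf hfv' hf0 hzero hv'U₀
  obtain ⟨g, hg0, hgv'⟩ := exists_affineMap_eq_zero_of_notMem_affineSpan hv'U₀
  set K := g v • f - f v • g
  have hK : ∀ x, K x = g v * f x - f v * g x := fun x => rfl
  have hK0 : ∀ s ∈ insert v U₀, K s = 0 := forall_mem_insert.2
    ⟨by rw [hK]; ring, fun u hu => by rw [hK, hf0 u hu, hg0 u hu]; ring⟩
  have hKQ : ∀ x ∈ Q, K x ≤ 0 := by
    refine h.isPolytope.convexHull_vertexSet ▸ fun x hx =>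
      convexHull_min (fun w hw => ?_) ((convex_Iic 0).affine_preimage K) hx
    rcases eq_or_ne w v with rfl | hwv
    · exact (hK0 w (mem_insert w U₀)).le
    rcases (hf w (vertexSet_subset Q' (h.mem_vertexSet'_of_ne hw hwv))).lt_or_eq with hfw | hfw
    · exact h.pencil_apply_nonpos hU₀W hU₀ne hU₀d hf0 hg0 hfv' hgv' hw hfw
    · exact (hK0 w (mem_insert_of_mem v (hzero w hw hwv hfw))).le
  have hd : adim Q ≤ adim (insert v U₀) + 1 := by
    rw [adim_insert_of_notMem_affineSpan hU₀ne hvU₀]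
    omega
  obtain ⟨x, hx, hKx⟩ : ∃ x ∈ Q, K x ≠ 0 := by
    by_cases hfv : f v = 0
    · -- `K x₀ = g v * f x₀`, and `f v = g v = 0` would put `v` on the flat `affineSpan ℝ U₀`
      refine ⟨x₀, h.subset hx₀, fun hKx₀ => hvU₀ ?_⟩
      rw [hK, hfv, zero_mul, sub_zero] at hKx₀
      refine mem_affineSpan_of_apply_eq_zero_of_apply_eq_zero hU₀Q hU₀ne h.pushed_mem
        (by rw [adim_insert_of_notMem_affineSpan hU₀ne hv'U₀]; omega)
        (forall_mem_insert.2 ⟨hfv', hf0⟩) hg0 (by rw [hgv']; exact one_ne_zero)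
        (subset_affineSpan ℝ Q (h.subset hx₀)) hfx₀ (subset_affineSpan ℝ Q h.mem_vertexSet.mem)
        hfv ((mul_eq_zero.1 hKx₀).resolve_right hfx₀)
    · exact ⟨v', h.pushed_mem, by rw [hK, hfv', hgv']; simpa using hfv⟩
  have hSQ := insert_subset h.mem_vertexSet.mem hU₀Q
  exact ⟨_, h.isPolytope.isFacetOf_setOf_apply_eq_zero hKQ hSQ (insert_nonempty v U₀) hK0 hd hx
    hKx, fun s hs => ⟨hSQ hs, hK0 s hs⟩, hd⟩

lemma exists_isFacetOf_insert_sdiff (h : ObtainedByPushing Q Q' v v') {f : V →ᵃ[ℝ] ℝ}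
    (hf : ∀ x ∈ Q', f x ≤ 0) {x₀ : V} (hx₀ : x₀ ∈ Q') (hfx₀ : f x₀ ≠ 0) (hfv' : f v' = 0)
    {U : Set V} (hU : U = {t ∈ vertexSet Q' | f t = 0}) (hUd : adim U + 1 = adim Q) :
    ∃ G, IsFacetOf G Q ∧ insert v (U \ {v'}) ⊆ G ∧ adim Q ≤ adim (insert v (U \ {v'})) + 1 := by
  have hU₀ : U \ {v'} = {w ∈ vertexSet Q \ {v} | f w = 0} := by
    rw [hU, ← h.vertexSet_sdiff_eq]
    ext t
    simp only [mem_sdiff, mem_ofPred_eq]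
    tauto
  have hUQ : U ⊆ Q := hU ▸ (sep_subset _ _).trans ((vertexSet_subset Q').trans h.subset)
  have : FiniteDimensional ℝ (vectorSpan ℝ U) := h.finiteDimensional_vectorSpan hUQ
  have : FiniteDimensional ℝ (vectorSpan ℝ (U \ {v'})) :=
    h.finiteDimensional_vectorSpan (sdiff_subset.trans hUQ)
  have hf0 : ∀ u ∈ U, f u = 0 := fun u hu => (hU ▸ hu).2
  have hv'U : v' ∈ U := hU ▸ ⟨h.mem_vertexSet', hfv'⟩
  have hU₀W : U \ {v'} ⊆ vertexSet Q := by rw [hU₀]; exact fun w hw => hw.1.1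
  have hUU₀ : adim U ≤ adim (U \ {v'}) + 1 := by
    have : adim (insert v' (U \ {v'})) ≤ adim (U \ {v'}) + 1 :=
      finrank_vectorSpan_insert_le_set ℝ _ v'
    rwa [insert_sdiff_singleton, insert_eq_of_mem hv'U] at this
  have hU₀U : adim (U \ {v'}) ≤ adim U := adim_mono sdiff_subset
  rcases (U \ {v'}).eq_empty_or_nonempty with hU₀e | hU₀ne
  · -- `U = {v'}`: `Q` is a segment and `{v}` is one of its facets
    have hU0 : adim U = 0 := by
      rw [adim, Submodule.finrank_eq_zero]
      exact eq_bot_iff.2 ((vectorSpan_mono ℝ (sdiff_eq_empty.1 hU₀e)).trans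
        (vectorSpan_singleton ℝ v').le)
    have hv0 : adim ({v} : Set V) = 0 := by rw [adim, vectorSpan_singleton, finrank_bot]
    rw [hU₀e, insert_empty_eq]
    exact ⟨{v}, ⟨h.mem_vertexSet, by omega⟩, subset_rfl, by omega⟩
  by_cases hU₀d : adim (U \ {v'}) + 1 = adim Q
  · have hfv := h.apply_eq_zero_of_apply_eq_zero hU₀W hU₀ne hU₀d (fun u hu => hf0 u hu.1) hfv'
    have hG := h.isPolytope.isFacetOf_setOf_apply_eq_zero (h.apply_nonpos hf hfv.le) hUQ
      ⟨v', hv'U⟩ hf0 hUd.ge (h.subset hx₀) hfx₀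
    have := adim_mono (subset_insert v (U \ {v'}))
    exact ⟨_, hG, insert_subset ⟨h.mem_vertexSet.mem, hfv⟩ fun u hu => ⟨hUQ hu.1, hf0 u hu.1⟩,
      by omega⟩
  · have hv'U₀ : v' ∉ affineSpan ℝ (U \ {v'}) := fun hv' => by
      have := adim_le_of_subset_affineSpan (S := U) (T := U \ {v'}) fun u hu =>
        (eq_or_ne u v').elim (fun huv' => huv' ▸ hv') fun huv' => subset_affineSpan ℝ _ ⟨hu, huv'⟩
      omega
    exact h.exists_isFacetOf_insert_of_adim_add_two hf hx₀ hfx₀ hfv' hU₀ hU₀ne (by omega) hv'U₀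

lemma exists_isFacetOf_pushVerts_subset (h : ObtainedByPushing Q Q' v v') {F' : Set V}
    (hF' : IsFacetOf F' Q') :
    ∃ G, IsFacetOf G Q ∧ pushVerts F' v v' ⊆ G ∧ adim Q ≤ adim (pushVerts F' v v') + 1 := by
  have hP' := h.isPolytope'
  obtain ⟨f, hf, hF'f⟩ := hF'.1.exists_affineMap (hF'.1.nonempty hP' h.nonempty')
  have hU : vertexSet F' = {t ∈ vertexSet Q' | f t = 0} := by
    rw [hF'.1.vertexSet_eq hP', hF'f]
    ext t
    exact ⟨fun ⟨ht, _, hft⟩ => ⟨ht, hft⟩, fun ⟨ht, hft⟩ => ⟨ht, vertexSet_subset Q' ht, hft⟩⟩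
  have hUd : adim (vertexSet F') + 1 = adim Q := by
    rw [hF'.1.adim_vertexSet hP', hF'.2, h.adim_eq]
  obtain ⟨x₀, hx₀, hfx₀⟩ : ∃ x ∈ Q', f x ≠ 0 := by
    by_contra! hzero
    have hF'd := hF'.2
    rw [hF'f, sep_eq_self_iff_mem_true.2 hzero] at hF'd
    omega
  by_cases hv'F' : v' ∈ F'
  · rw [pushVerts, if_pos hv'F', union_singleton]
    exact h.exists_isFacetOf_insert_sdiff hf hx₀ hfx₀ (hF'f ▸ hv'F').2 hU hUd
  rw [pushVerts, if_neg hv'F']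
  have hUQ : vertexSet F' ⊆ Q := (vertexSet_subset F').trans (hF'.1.subset.trans h.subset)
  have hUne := hF'.1.vertexSet_nonempty hP' h.nonempty'
  have hf0 : ∀ u ∈ vertexSet F', f u = 0 := fun u hu => (hU ▸ hu).2
  have hUW : vertexSet F' ⊆ vertexSet Q := fun u hu =>
    (h.mem_vertexSet_of_ne (hU ▸ hu).1 fun huv' => hv'F' (huv' ▸ vertexSet_subset F' hu)).1
  have hfv := h.apply_nonpos_of_apply_nonpos hUW hUne hUd hf0
    (hf v' (vertexSet_subset Q' h.mem_vertexSet'))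
  exact ⟨_, h.isPolytope.isFacetOf_setOf_apply_eq_zero (h.apply_nonpos hf hfv) hUQ hUne hf0 hUd.ge
    (h.subset hx₀) hfx₀, fun u hu => ⟨hUQ hu, hf0 u hu⟩, hUd.ge⟩

lemma pushVerts_subset (h : ObtainedByPushing Q Q' v v') {F' : Set V} (hF' : IsFaceOf F' Q') :
    pushVerts F' v v' ⊆ Q := by
  have hF'Q := (vertexSet_subset F').trans (hF'.subset.trans h.subset)
  unfold pushVerts
  split_ifs
  · exact union_subset (sdiff_subset.trans hF'Q) (singleton_subset_iff.2 h.mem_vertexSet.mem)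
  · exact hF'Q

lemma pushVerts_nonempty (h : ObtainedByPushing Q Q' v v') {F' : Set V} (hF' : IsFaceOf F' Q') :
    (pushVerts F' v v').Nonempty := by
  by_cases hv' : v' ∈ F'
  · exact ⟨v, mem_pushVerts hv'⟩
  · rw [pushVerts, if_neg hv']
    exact hF'.vertexSet_nonempty h.isPolytope' h.nonempty'

lemma pushVerts_subset_pushFacet (h : ObtainedByPushing Q Q' v v') {F' : Set V}
    (hF' : IsFaceOf F' Q') : pushVerts F' v v' ⊆ pushFacet Q F' v v' := fun _ hx =>
  ⟨h.pushVerts_subset hF' hx, subset_affineSpan ℝ _ hx⟩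

lemma eq_pushFacet (h : ObtainedByPushing Q Q' v v') {F' : Set V} (hF' : IsFacetOf F' Q')
    {G : Set V} (hG : IsFacetOf G Q) (hsub : pushVerts F' v v' ⊆ G) : G = pushFacet Q F' v v' := by
  obtain ⟨-, -, -, hd⟩ := h.exists_isFacetOf_pushVerts_subset hF'
  exact hG.eq_inter_affineSpan_of_subset h.isPolytope hsub (h.pushVerts_nonempty hF'.1) hd

lemma isFacetOf_pushFacet (h : ObtainedByPushing Q Q' v v') {F' : Set V}
    (hF' : IsFacetOf F' Q') : IsFacetOf (pushFacet Q F' v v') Q := by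
  obtain ⟨G, hG, hsub, -⟩ := h.exists_isFacetOf_pushVerts_subset hF'
  exact h.eq_pushFacet hF' hG hsub ▸ hG

/-- Here `pushVerts F' v v'` spans the same hyperplane as the vertices of `F'`. -/
lemma mem_pushFacet (h : ObtainedByPushing Q Q' v v') {F' : Set V} (hF' : IsFacetOf F' Q')
    (hv'F' : v' ∈ F') (hv : v ∈ affineSpan ℝ (vertexSet F')) : v' ∈ pushFacet Q F' v v' := by
  have hP' := h.isPolytope'
  have : FiniteDimensional ℝ (vectorSpan ℝ (vertexSet F')) :=
    h.finiteDimensional_vectorSpan ((vertexSet_subset F').trans (hF'.1.subset.trans h.subset))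
  obtain ⟨-, -, -, hd⟩ := h.exists_isFacetOf_pushVerts_subset hF'
  have hspan : affineSpan ℝ (pushVerts F' v v') = affineSpan ℝ (vertexSet F') := by
    refine affineSpan_eq_of_subset_of_adim_le (h.pushVerts_nonempty hF'.1) ?_ ?_
    · rw [pushVerts, if_pos hv'F']
      exact union_subset (sdiff_subset.trans (subset_affineSpan ℝ _)) (singleton_subset_iff.2 hv)
    · have := hF'.2
      rw [hF'.1.adim_vertexSet hP', h.adim_eq] at *
      omega
  refine ⟨h.pushed_mem, hspan ▸ subset_affineSpan ℝ _ ?_⟩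
  rw [hF'.1.vertexSet_eq hP']
  exact ⟨h.mem_vertexSet', hv'F'⟩

lemma exists_subset_pushFacet_of_isRidgeOf (h : ObtainedByPushing Q Q' v v') {R : Set V}
    (hR : IsRidgeOf R Q') : ∃ D : Set V, D.Nonempty ∧ adim Q ≤ adim D + 2 ∧
      ∀ F', IsFacetOf F' Q' → R ⊆ F' → D ⊆ pushFacet Q F' v v' := by
  have hP' := h.isPolytope'
  have hv'R : v' ∈ R → v' ∈ vertexSet R := fun hv'R =>
    (hR.1.vertexSet_eq hP').symm ▸ ⟨h.mem_vertexSet', hv'R⟩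
  have hRne := hR.1.vertexSet_nonempty hP' h.nonempty'
  have hRd : adim Q ≤ adim (vertexSet R) + 2 := by
    rw [hR.1.adim_vertexSet hP', ← h.adim_eq, hR.2]
  have hRF : ∀ F', IsFacetOf F' Q' → R ⊆ F' → vertexSet R \ {v'} ⊆ pushFacet Q F' v v' :=
    fun F' hF' hRF' => (sdiff_subset_sdiff (hR.1.vertexSet_mono hP' hF'.1 hRF') subset_rfl).trans
      ((sdiff_subset_pushVerts F' v v').trans (h.pushVerts_subset_pushFacet hF'.1))
  by_cases hv'R' : v' ∈ R
  swap
  · refine ⟨vertexSet R, hRne, hRd, fun F' hF' hRF' => ?_⟩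
    rw [← sdiff_singleton_eq_self fun hv' => hv'R' (vertexSet_subset R hv')]
    exact hRF F' hF' hRF'
  have hRX : vertexSet R = insert v' (vertexSet R \ {v'}) := by
    rw [insert_sdiff_singleton, insert_eq_of_mem (hv'R hv'R')]
  have : FiniteDimensional ℝ (vectorSpan ℝ (vertexSet R \ {v'})) := h.finiteDimensional_vectorSpan
    (sdiff_subset.trans ((vertexSet_subset R).trans (hR.1.subset.trans h.subset)))
  by_cases hvX : v ∈ affineSpan ℝ (vertexSet R \ {v'})
  · refine ⟨vertexSet R, hRne, hRd, fun F' hF' hRF' => hRX ▸ insert_subset ?_ (hRF F' hF' hRF')⟩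
    exact h.mem_pushFacet hF' (hRF' hv'R')
      (affineSpan_mono ℝ (sdiff_subset.trans (hR.1.vertexSet_mono hP' hF'.1 hRF')) hvX)
  · refine ⟨insert v (vertexSet R \ {v'}), insert_nonempty _ _, ?_, fun F' hF' hRF' => insert_subset
      (h.pushVerts_subset_pushFacet hF'.1 (mem_pushVerts (hRF' hv'R'))) (hRF F' hF' hRF')⟩
    have := adim_insert_le_adim_insert v' hvX
    rw [← hRX] at this
    omega

end ObtainedByPushing

/-- If `Q'` is obtained from `Q` by pushing `v` to `v' ∈ Q`,
then (1) for each facet `F'` of `Q'` there is a unique facet `φ F'` of `Q`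
containing the corresponding vertex set, and (2) `φ` sends adjacent facets of
`Q'` to the same facet or to adjacent facets of `Q`. -/
theorem stmt6 {V : Type*} [AddCommGroup V] [Module ℝ V]
    (Q Q' : Set V) (v v' : V) (h : ObtainedByPushing Q Q' v v') :
    ∃ φ : Set V → Set V,
      (∀ F', IsFacetOf F' Q' →
        (IsFacetOf (φ F') Q ∧ pushVerts F' v v' ⊆ φ F') ∧
        (∀ G, IsFacetOf G Q → pushVerts F' v v' ⊆ G → G = φ F')) ∧
      (∀ F₁ F₂, IsFacetOf F₁ Q' → IsFacetOf F₂ Q' → F₁ ≠ F₂ →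
        IsRidgeOf (F₁ ∩ F₂) Q' →
        φ F₁ = φ F₂ ∨ (φ F₁ ≠ φ F₂ ∧ IsRidgeOf (φ F₁ ∩ φ F₂) Q)) := by
  refine ⟨fun F' => pushFacet Q F' v v', fun F' hF' =>
    ⟨⟨h.isFacetOf_pushFacet hF', h.pushVerts_subset_pushFacet hF'.1⟩,
      fun G hG hsub => h.eq_pushFacet hF' hG hsub⟩, fun F₁ F₂ hF₁ hF₂ _ hR => ?_⟩
  by_cases heq : pushFacet Q F₁ v v' = pushFacet Q F₂ v v'
  · exact Or.inl heq
  obtain ⟨D, hDne, hDd, hD⟩ := h.exists_subset_pushFacet_of_isRidgeOf hR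
  exact Or.inr ⟨heq, h.isPolytope.isRidgeOf_inter (h.isFacetOf_pushFacet hF₁)
    (h.isFacetOf_pushFacet hF₂) heq
    (fun x hx => ⟨hD F₁ hF₁ inter_subset_left hx, hD F₂ hF₂ inter_subset_right hx⟩) hDne hDd⟩
end

section
/- The linear functional x ↦ 5x1 + x2 + 2x3 + x4 attains its maximum over Q− at the unique point (45,0,0,0), which is a vertex of Q−. Consequently, by the symmetries of the configuration, for every p in {(±5,±1,±2,±1), (±1,±5,±1,±2)} (the 32 outer facet normals of Q+) the functional x ↦ ⟨p, x⟩ attains its maximum over Q− at a unique point, which is a vertex of Q−; and symmetrically, for every p in {(±1,±2,±5,±1), (±2,±1,±1,±5)} (the 32 outer facet normals of Q−) the functional x ↦ ⟨p, x⟩ attains its maximum over Q+ at a unique point, which is a vertex of Q+. -/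
open scoped Pointwise

variable {V : Type*} [AddCommGroup V] [Module ℝ V]

def Sgn : Set ℝ := {1, -1}

/-- The 24 vertices of `Q⁺ ⊂ ℝ⁴`. -/
def QplusPts : Set (Fin 4 → ℝ) :=
  {x | ∃ a ∈ Sgn, ∃ b ∈ Sgn,
    x = ![a * 18, 0, 0, 0] ∨ x = ![0, a * 18, 0, 0] ∨
    x = ![0, 0, a * 45, 0] ∨ x = ![0, 0, 0, a * 45] ∨
    x = ![a * 15, b * 15, 0, 0] ∨ x = ![0, 0, a * 30, b * 30] ∨
    x = ![0, a * 10, b * 40, 0] ∨ x = ![a * 10, 0, 0, b * 40]}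

noncomputable def Qplus4 : Set (Fin 4 → ℝ) := convexHull ℝ QplusPts

/-- The 32 outer facet normals `(±5,±1,±2,±1)`, `(±1,±5,±1,±2)` of `Q⁺`. -/
def Wplus : Set (Fin 4 → ℝ) :=
  {w | ∃ e : Fin 4 → ℝ, (∀ i, e i = 1 ∨ e i = -1) ∧
    (w = ![5 * e 0, e 1, 2 * e 2, e 3] ∨ w = ![e 0, 5 * e 1, e 2, 2 * e 3])}

/-- The 24 vertices of `Q⁻ ⊂ ℝ⁴`. -/
def QminusPts : Set (Fin 4 → ℝ) :=
  {x | ∃ a ∈ Sgn, ∃ b ∈ Sgn,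
    x = ![0, 0, 0, a * 18] ∨ x = ![0, 0, a * 18, 0] ∨
    x = ![a * 45, 0, 0, 0] ∨ x = ![0, a * 45, 0, 0] ∨
    x = ![0, 0, a * 15, b * 15] ∨ x = ![a * 30, b * 30, 0, 0] ∨
    x = ![a * 40, 0, b * 10, 0] ∨ x = ![0, a * 40, 0, b * 10]}

noncomputable def Qminus4 : Set (Fin 4 → ℝ) := convexHull ℝ QminusPts

/-- The 32 outer facet normals `(±1,±2,±5,±1)`, `(±2,±1,±1,±5)` of `Q⁻`. -/
def Wminus : Set (Fin 4 → ℝ) :=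
  {w | ∃ e : Fin 4 → ℝ, (∀ i, e i = 1 ∨ e i = -1) ∧
    (w = ![e 0, 2 * e 1, 5 * e 2, e 3] ∨ w = ![2 * e 0, e 1, e 2, 5 * e 3])}

/-- The functional `x ↦ ⟨p, x⟩` attains its maximum over `P` at a unique point,
which is a vertex of `P`. -/
def UniqueVertexMax (p : Fin 4 → ℝ) (P : Set (Fin 4 → ℝ)) : Prop :=
  ∃ m, m ∈ P ∧ IsVertexOf m P ∧ (∀ y ∈ P, ∑ i, p i * y i ≤ ∑ i, p i * m i) ∧
    ∀ y ∈ P, (∀ z ∈ P, ∑ i, p i * z i ≤ ∑ i, p i * y i) → y = m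


/-!
If a linear functional `l` attains its maximum over a set `S` only at `m ∈ S`, then the set
`insert m {y | l y < l m}` is convex, hence contains `conv S`; so `m` is the unique maximizer of
`l` over `conv S` and `{m}` is a face. The normals `(5,1,2,1)` and `(1,5,1,2)` have such strict
maxima on the vertex set of `Q⁻` at `45 e₁` and `45 e₂`, and `(1,2,5,1)`, `(2,1,1,5)` on that of
`Q⁺` at `45 e₃` and `45 e₄`. Both vertex sets are invariant under coordinate sign changes, and
`(e * p) ⬝ᵥ (e * y) = p ⬝ᵥ y` for a sign vector `e`, which covers all 64 normals.
-/

def IsStrictMaxOn {α β : Type*} [LT β] (f : α → β) (s : Set α) (a : α) : Prop :=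
  a ∈ s ∧ ∀ x ∈ s, x ≠ a → f x < f a

theorem convex_insert_setOf_lt (l : V →ₗ[ℝ] ℝ) (m : V) :
    Convex ℝ (insert m {y | l y < l m}) := by
  have combo_lt {x y : V} {a b : ℝ} (hx : l x < l m) (hy : l y ≤ l m) (ha : 0 < a) (hb : 0 ≤ b)
      (hab : a + b = 1) : l (a • x + b • y) < l m := by
    have hm : l m = a * l m + b * l m := by rw [← add_mul, hab, one_mul]
    rw [map_add, map_smul, map_smul, smul_eq_mul, smul_eq_mul]
    nlinarith [mul_pos ha (sub_pos.2 hx), mul_nonneg hb (sub_nonneg.2 hy)]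
  rintro x hx y hy a b ha hb hab
  rcases ha.eq_or_lt with rfl | ha
  · rw [zero_add] at hab
    simpa [hab] using hy
  rcases hb.eq_or_lt with rfl | hb
  · rw [add_zero] at hab
    simpa [hab] using hx
  rcases hx with rfl | hx
  · rcases hy with rfl | hy
    · exact .inl (Convex.combo_self hab _)
    · rw [add_comm] at hab ⊢
      exact .inr (combo_lt hy le_rfl hb ha.le hab)
  · have hy' : l y ≤ l m := by
      rcases hy with rfl | hy
      exacts [le_rfl, hy.le]
    exact .inr (combo_lt hx hy' ha hb.le hab)

namespace IsStrictMaxOn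

section LinearMap

variable {S : Set V} {l : V →ₗ[ℝ] ℝ} {m : V}

theorem convexHull_subset (h : IsStrictMaxOn l S m) :
    convexHull ℝ S ⊆ insert m {y | l y < l m} :=
  convexHull_min (fun y hy => or_iff_not_imp_left.2 (h.2 y hy)) (convex_insert_setOf_lt l m)

theorem le_of_mem_convexHull (h : IsStrictMaxOn l S m) {y : V} (hy : y ∈ convexHull ℝ S) :
    l y ≤ l m := by
  rcases h.convexHull_subset hy with rfl | hy
  exacts [le_rfl, hy.le]

theorem setOf_isMaxOn_convexHull_eq (h : IsStrictMaxOn l S m) :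
    {x ∈ convexHull ℝ S | ∀ y ∈ convexHull ℝ S, l y ≤ l x} = {m} := by
  have hm : m ∈ convexHull ℝ S := subset_convexHull ℝ S h.1
  ext x
  constructor
  · rintro ⟨hx, hmax⟩
    exact (h.convexHull_subset hx).resolve_right fun hlt => (hmax m hm).not_gt hlt
  · rintro rfl
    exact ⟨hm, fun y hy => h.le_of_mem_convexHull hy⟩

theorem isVertexOf_convexHull (h : IsStrictMaxOn l S m) : IsVertexOf m (convexHull ℝ S) :=
  ⟨l, h.setOf_isMaxOn_convexHull_eq.symm⟩

end LinearMap

section DotProduct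

variable {ι : Type*} [Fintype ι] {S : Set (ι → ℝ)} {p m : ι → ℝ}

theorem dotProduct_convexHull (h : IsStrictMaxOn (p ⬝ᵥ ·) S m) :
    m ∈ convexHull ℝ S ∧ IsVertexOf m (convexHull ℝ S) ∧
      (∀ y ∈ convexHull ℝ S, p ⬝ᵥ y ≤ p ⬝ᵥ m) ∧
      ∀ y ∈ convexHull ℝ S, (∀ z ∈ convexHull ℝ S, p ⬝ᵥ z ≤ p ⬝ᵥ y) → y = m := by
  have h' : IsStrictMaxOn (dotProductBilin ℝ ℝ p) S m := h
  refine ⟨subset_convexHull ℝ S h.1, h'.isVertexOf_convexHull,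
    fun y hy => h'.le_of_mem_convexHull hy, fun y hy hmax => ?_⟩
  rw [← Set.mem_singleton_iff, ← h'.setOf_isMaxOn_convexHull_eq]
  exact ⟨hy, hmax⟩

theorem dotProduct_mul {e : ι → ℝ} (he : e * e = 1) (hS : ∀ y ∈ S, e * y ∈ S)
    (h : IsStrictMaxOn (p ⬝ᵥ ·) S m) : IsStrictMaxOn ((e * p) ⬝ᵥ ·) S (e * m) := by
  have flip : ∀ z, (e * p) ⬝ᵥ z = p ⬝ᵥ (e * z) := fun z => by
    simp only [dotProduct, Pi.mul_apply, mul_left_comm, mul_assoc]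
  refine ⟨hS m h.1, fun y hy hne => ?_⟩
  show (e * p) ⬝ᵥ y < (e * p) ⬝ᵥ (e * m)
  rw [flip, flip, ← mul_assoc, he, one_mul]
  refine h.2 _ (hS y hy) fun hey => hne ?_
  rw [← hey, ← mul_assoc, he, one_mul]

end DotProduct

theorem uniqueVertexMax {S : Set (Fin 4 → ℝ)} {p m : Fin 4 → ℝ}
    (h : IsStrictMaxOn (p ⬝ᵥ ·) S m) : UniqueVertexMax p (convexHull ℝ S) :=
  ⟨m, h.dotProduct_convexHull⟩

end IsStrictMaxOn

theorem mul_mem_Sgn {a b : ℝ} (ha : a ∈ Sgn) (hb : b ∈ Sgn) : a * b ∈ Sgn := by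
  rcases ha with rfl | rfl <;> rcases hb with rfl | rfl <;> norm_num [Sgn]

theorem mul_self_eq_one_of_forall_mem_Sgn {ι : Type*} {e : ι → ℝ} (he : ∀ i, e i ∈ Sgn) :
    e * e = 1 := by
  funext i
  obtain h | h : e i = 1 ∨ e i = -1 := he i <;> simp [h]

theorem IsStrictMaxOn.uniqueVertexMax_mul {S : Set (Fin 4 → ℝ)} {w m e : Fin 4 → ℝ}
    (h : IsStrictMaxOn (w ⬝ᵥ ·) S m) (hS : ∀ y ∈ S, e * y ∈ S) (he : ∀ i, e i ∈ Sgn) :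
    UniqueVertexMax (e * w) (convexHull ℝ S) :=
  (h.dotProduct_mul (mul_self_eq_one_of_forall_mem_Sgn he) hS).uniqueVertexMax

theorem mul_mem_QminusPts {e y : Fin 4 → ℝ} (he : ∀ i, e i ∈ Sgn) (hy : y ∈ QminusPts) :
    e * y ∈ QminusPts := by
  obtain ⟨a, ha, b, hb, hy⟩ := hy
  have hea i := mul_mem_Sgn (he i) ha
  have heb i := mul_mem_Sgn (he i) hb
  rcases hy with rfl | rfl | rfl | rfl | rfl | rfl | rfl | rfl
  · exact ⟨_, hea 3, _, heb 0, by simp [funext_iff, Fin.forall_fin_succ, mul_assoc]⟩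
  · exact ⟨_, hea 2, _, heb 0, by simp [funext_iff, Fin.forall_fin_succ, mul_assoc]⟩
  · exact ⟨_, hea 0, _, heb 0, by simp [funext_iff, Fin.forall_fin_succ, mul_assoc]⟩
  · exact ⟨_, hea 1, _, heb 0, by simp [funext_iff, Fin.forall_fin_succ, mul_assoc]⟩
  · exact ⟨_, hea 2, _, heb 3, by simp [funext_iff, Fin.forall_fin_succ, mul_assoc]⟩
  · exact ⟨_, hea 0, _, heb 1, by simp [funext_iff, Fin.forall_fin_succ, mul_assoc]⟩
  · exact ⟨_, hea 0, _, heb 2, by simp [funext_iff, Fin.forall_fin_succ, mul_assoc]⟩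
  · exact ⟨_, hea 1, _, heb 3, by simp [funext_iff, Fin.forall_fin_succ, mul_assoc]⟩

theorem mul_mem_QplusPts {e y : Fin 4 → ℝ} (he : ∀ i, e i ∈ Sgn) (hy : y ∈ QplusPts) :
    e * y ∈ QplusPts := by
  obtain ⟨a, ha, b, hb, hy⟩ := hy
  have hea i := mul_mem_Sgn (he i) ha
  have heb i := mul_mem_Sgn (he i) hb
  rcases hy with rfl | rfl | rfl | rfl | rfl | rfl | rfl | rfl
  · exact ⟨_, hea 0, _, heb 0, by simp [funext_iff, Fin.forall_fin_succ, mul_assoc]⟩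
  · exact ⟨_, hea 1, _, heb 0, by simp [funext_iff, Fin.forall_fin_succ, mul_assoc]⟩
  · exact ⟨_, hea 2, _, heb 0, by simp [funext_iff, Fin.forall_fin_succ, mul_assoc]⟩
  · exact ⟨_, hea 3, _, heb 0, by simp [funext_iff, Fin.forall_fin_succ, mul_assoc]⟩
  · exact ⟨_, hea 0, _, heb 1, by simp [funext_iff, Fin.forall_fin_succ, mul_assoc]⟩
  · exact ⟨_, hea 2, _, heb 3, by simp [funext_iff, Fin.forall_fin_succ, mul_assoc]⟩
  · exact ⟨_, hea 1, _, heb 2, by simp [funext_iff, Fin.forall_fin_succ, mul_assoc]⟩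
  · exact ⟨_, hea 0, _, heb 3, by simp [funext_iff, Fin.forall_fin_succ, mul_assoc]⟩

theorem isStrictMaxOn_QminusPts_5121 :
    IsStrictMaxOn (![5, 1, 2, 1] ⬝ᵥ ·) QminusPts ![45, 0, 0, 0] := by
  refine ⟨⟨1, .inl rfl, 1, .inl rfl, by norm_num⟩, ?_⟩
  rintro y ⟨a, ha, b, hb, hy⟩
  rcases ha with rfl | rfl <;> rcases hb with rfl | rfl <;>
    rcases hy with rfl | rfl | rfl | rfl | rfl | rfl | rfl | rfl <;>
    norm_num [dotProduct, Fin.sum_univ_four, Matrix.cons_val_two, Matrix.cons_val_three]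

theorem isStrictMaxOn_QminusPts_1512 :
    IsStrictMaxOn (![1, 5, 1, 2] ⬝ᵥ ·) QminusPts ![0, 45, 0, 0] := by
  refine ⟨⟨1, .inl rfl, 1, .inl rfl, by norm_num⟩, ?_⟩
  rintro y ⟨a, ha, b, hb, hy⟩
  rcases ha with rfl | rfl <;> rcases hb with rfl | rfl <;>
    rcases hy with rfl | rfl | rfl | rfl | rfl | rfl | rfl | rfl <;>
    norm_num [dotProduct, Fin.sum_univ_four, Matrix.cons_val_two, Matrix.cons_val_three]

theorem isStrictMaxOn_QplusPts_1251 :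
    IsStrictMaxOn (![1, 2, 5, 1] ⬝ᵥ ·) QplusPts ![0, 0, 45, 0] := by
  refine ⟨⟨1, .inl rfl, 1, .inl rfl, by norm_num⟩, ?_⟩
  rintro y ⟨a, ha, b, hb, hy⟩
  rcases ha with rfl | rfl <;> rcases hb with rfl | rfl <;>
    rcases hy with rfl | rfl | rfl | rfl | rfl | rfl | rfl | rfl <;>
    norm_num [dotProduct, Fin.sum_univ_four, Matrix.cons_val_two, Matrix.cons_val_three]

theorem isStrictMaxOn_QplusPts_2115 :
    IsStrictMaxOn (![2, 1, 1, 5] ⬝ᵥ ·) QplusPts ![0, 0, 0, 45] := by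
  refine ⟨⟨1, .inl rfl, 1, .inl rfl, by norm_num⟩, ?_⟩
  rintro y ⟨a, ha, b, hb, hy⟩
  rcases ha with rfl | rfl <;> rcases hb with rfl | rfl <;>
    rcases hy with rfl | rfl | rfl | rfl | rfl | rfl | rfl | rfl <;>
    norm_num [dotProduct, Fin.sum_univ_four, Matrix.cons_val_two, Matrix.cons_val_three]

theorem mul_vecCons_four (e : Fin 4 → ℝ) (a b c d : ℝ) :
    e * ![a, b, c, d] = ![e 0 * a, e 1 * b, e 2 * c, e 3 * d] := by
  funext i
  fin_cases i <;> rfl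

/-- The functional `x ↦ 5x₁ + x₂ + 2x₃ + x₄` attains its
maximum over `Q⁻` at the unique point `(45,0,0,0)`, a vertex of `Q⁻`; and, by
symmetry, every one of the 32 facet normals of `Q⁺` attains its maximum over
`Q⁻` at a unique point which is a vertex, and symmetrically every facet normal
of `Q⁻` attains its maximum over `Q⁺` at a unique point which is a vertex. -/
theorem stmt15 :
    ((![45, 0, 0, 0] : Fin 4 → ℝ) ∈ Qminus4 ∧
      IsVertexOf (![45, 0, 0, 0] : Fin 4 → ℝ) Qminus4 ∧
      (∀ y ∈ Qminus4, ∑ i, (![5, 1, 2, 1] : Fin 4 → ℝ) i * y i ≤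
        ∑ i, (![5, 1, 2, 1] : Fin 4 → ℝ) i * (![45, 0, 0, 0] : Fin 4 → ℝ) i) ∧
      (∀ y ∈ Qminus4,
        (∀ z ∈ Qminus4, ∑ i, (![5, 1, 2, 1] : Fin 4 → ℝ) i * z i ≤
          ∑ i, (![5, 1, 2, 1] : Fin 4 → ℝ) i * y i) →
        y = ![45, 0, 0, 0])) ∧
    (∀ p ∈ Wplus, UniqueVertexMax p Qminus4) ∧
    (∀ p ∈ Wminus, UniqueVertexMax p Qplus4) := by
  refine ⟨isStrictMaxOn_QminusPts_5121.dotProduct_convexHull, ?_, ?_⟩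
  · rintro p ⟨e, he, rfl | rfl⟩
    · simpa [Qminus4, mul_vecCons_four, mul_comm] using
        isStrictMaxOn_QminusPts_5121.uniqueVertexMax_mul (fun y => mul_mem_QminusPts he) he
    · simpa [Qminus4, mul_vecCons_four, mul_comm] using
        isStrictMaxOn_QminusPts_1512.uniqueVertexMax_mul (fun y => mul_mem_QminusPts he) he
  · rintro p ⟨e, he, rfl | rfl⟩
    · simpa [Qplus4, mul_vecCons_four, mul_comm] using
        isStrictMaxOn_QplusPts_1251.uniqueVertexMax_mul (fun y => mul_mem_QplusPts he) he
    · simpa [Qplus4, mul_vecCons_four, mul_comm] using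
        isStrictMaxOn_QplusPts_2115.uniqueVertexMax_mul (fun y => mul_mem_QplusPts he) he
end
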